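/- The one-sided limits of H̃ at the critical value q = 3√3/2 agree: lim_{q → (3√3/2)⁻} H̃(q) = (2 − √3)·exp(√3/2) and lim_{q → (3√3/2)⁺} H̃(q) = (2 − √3)·exp(√3/2); in particular H̃ extends continuously across q = 3√3/2. -/

import Mathlib

/-!
Put `a = 1/√3` and `q* = 3√3/2`. Since `q* (z - a)² (z + 2a) = q* (z³ - z) + 1`, every root `w` of
`q (z³ - z) + 1` satisfies `(w - a)² (w + 2a) = 1/q* - 1/q`. In the closed right half-plane
`‖w + 2a‖ ≥ 2a > 1`, so `‖w - a‖² ≤ |1/q* - 1/q|`: as `q → q*` from either side, every root with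
nonnegative real part, `q̃` in particular, tends to the double root `a`, and `H̃(q)` tends to
`|(a - 1)/(a + 1)| · exp (q* a²) = (2 - √3) · exp (√3/2)`.

That `q̃` exists: the three roots sum to `0` and none is purely imaginary, so one of them lies in
the open right half-plane, and the roots are closed under conjugation.
-/

open Filter Set

/-- `w` is the root of `q (z^3 - z) + 1 = 0` with `Im w ≥ 0`, `Re w > 0` having the
smallest real part among all such roots. -/
def IsQtilde (q : ℝ) (w : ℂ) : Prop :=
  (q : ℂ) * (w ^ 3 - w) + 1 = 0 ∧ 0 ≤ w.im ∧ 0 < w.re ∧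
    ∀ z : ℂ, (q : ℂ) * (z ^ 3 - z) + 1 = 0 → 0 ≤ z.im → 0 < z.re → w.re ≤ z.re

/-- `H̃(q) = |(q̃ - 1)/(q̃ + 1)| · exp(q · Re(q̃²))` where `q̃` is the distinguished root. -/
noncomputable def Htilde (q : ℝ) : ℝ :=
  ‖(Classical.epsilon (IsQtilde q) - 1) / (Classical.epsilon (IsQtilde q) + 1)‖ *
    Real.exp (q * ((Classical.epsilon (IsQtilde q)) ^ 2).re)

open Polynomial Topology

theorem exists_depressed_cubic_factorization {K : Type*} [Field K] [IsAlgClosed K] (p c : K) :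
    ∃ z₁ z₂ z₃ : K, z₁ + z₂ + z₃ = 0 ∧
      ∀ z, z ^ 3 + p * z + c = (z - z₁) * (z - z₂) * (z - z₃) := by
  let P : Cubic K := ⟨1, 0, p, c⟩
  obtain ⟨x, y, w, h3⟩ := (Cubic.splits_iff_roots_eq_three (φ := RingHom.id K) (P := P)
    one_ne_zero).mp (by simpa using IsAlgClosed.splits P.toPoly)
  refine ⟨x, y, w, ?_, fun z => ?_⟩
  · have hb : (0 : K) = 1 * -(x + y + w) := Cubic.b_eq_three_roots one_ne_zero h3
    linear_combination hb
  · simpa [P, Cubic.toPoly, Cubic.map, sub_eq_add_neg] using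
      congrArg (eval z) (Cubic.eq_prod_three_roots one_ne_zero h3)

theorem exists_cubic_roots {q : ℝ} (hq : q ≠ 0) :
    ∃ z₁ z₂ z₃ : ℂ, z₁ + z₂ + z₃ = 0 ∧
      ∀ z, (q : ℂ) * (z ^ 3 - z) + 1 = 0 ↔ z = z₁ ∨ z = z₂ ∨ z = z₃ := by
  obtain ⟨z₁, z₂, z₃, hsum, hfac⟩ := exists_depressed_cubic_factorization (-1) (q : ℂ)⁻¹
  have hq' : (q : ℂ) ≠ 0 := Complex.ofReal_ne_zero.mpr hq
  refine ⟨z₁, z₂, z₃, hsum, fun z => ?_⟩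
  have : (q : ℂ) * (z ^ 3 - z) + 1 = q * ((z - z₁) * (z - z₂) * (z - z₃)) := by
    rw [← hfac]; field_simp; ring
  simp [this, hq', sub_eq_zero, or_assoc]

theorem cubic_roots_finite {q : ℝ} (hq : q ≠ 0) :
    {z : ℂ | (q : ℂ) * (z ^ 3 - z) + 1 = 0}.Finite := by
  obtain ⟨z₁, z₂, z₃, -, hroots⟩ := exists_cubic_roots hq
  exact (Set.toFinite {z₁, z₂, z₃}).subset fun z hz => (hroots z).mp hz

theorem re_ne_zero_of_cubic_root {q : ℝ} {z : ℂ} (hz : (q : ℂ) * (z ^ 3 - z) + 1 = 0) :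
    z.re ≠ 0 := by
  intro hre
  simpa [pow_succ, hre] using congrArg Complex.re hz

theorem cubic_root_conj {q : ℝ} {z : ℂ} (hz : (q : ℂ) * (z ^ 3 - z) + 1 = 0) :
    (q : ℂ) * (starRingEnd ℂ z ^ 3 - starRingEnd ℂ z) + 1 = 0 := by
  simpa using congrArg (starRingEnd ℂ) hz

theorem exists_cubic_root_im_nonneg_re_pos {q : ℝ} (hq : q ≠ 0) :
    ∃ z : ℂ, (q : ℂ) * (z ^ 3 - z) + 1 = 0 ∧ 0 ≤ z.im ∧ 0 < z.re := by
  obtain ⟨z₁, z₂, z₃, hsum, hroots⟩ := exists_cubic_roots hq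
  obtain ⟨z, hz, hzre⟩ : ∃ z, (q : ℂ) * (z ^ 3 - z) + 1 = 0 ∧ 0 < z.re := by
    have hroot : ∀ z ∈ ({z₁, z₂, z₃} : Set ℂ), (q : ℂ) * (z ^ 3 - z) + 1 = 0 :=
      fun z hz => (hroots z).mpr hz
    by_contra! h
    have hneg : ∀ z ∈ ({z₁, z₂, z₃} : Set ℂ), z.re < 0 := fun z hz =>
      (h z (hroot z hz)).lt_of_ne (re_ne_zero_of_cubic_root (hroot z hz))
    simp only [Set.mem_insert_iff, Set.mem_singleton_iff, forall_eq_or_imp, forall_eq] at hneg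
    have hsum_re : z₁.re + z₂.re + z₃.re = 0 := by simpa using congrArg Complex.re hsum
    linarith [hneg.1, hneg.2.1, hneg.2.2]
  rcases le_total 0 z.im with him | him
  · exact ⟨z, hz, him, hzre⟩
  · exact ⟨starRingEnd ℂ z, cubic_root_conj hz, by simpa using him, by simpa using hzre⟩

theorem exists_isQtilde {q : ℝ} (hq : q ≠ 0) : ∃ w, IsQtilde q w := by
  obtain ⟨w, ⟨hw, hwim, hwre⟩, hmin⟩ := Set.exists_min_image
    {z : ℂ | (q : ℂ) * (z ^ 3 - z) + 1 = 0 ∧ 0 ≤ z.im ∧ 0 < z.re} Complex.re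
    ((cubic_roots_finite hq).subset fun z hz => hz.1) (exists_cubic_root_im_nonneg_re_pos hq)
  exact ⟨w, hw, hwim, hwre, fun z hz him hre => hmin z ⟨hz, him, hre⟩⟩

theorem norm_sub_sq_le_of_cubic_root {q : ℝ} {w : ℂ} (hw : (q : ℂ) * (w ^ 3 - w) + 1 = 0)
    (hre : 0 ≤ w.re) : ‖w - ((√3)⁻¹ : ℝ)‖ ^ 2 ≤ |(3 * √3 / 2)⁻¹ - q⁻¹| := by
  have hq : (q : ℂ) ≠ 0 := by rintro hq; simp [hq] at hw
  have hs : ((√3 : ℝ) : ℂ) ^ 2 = 3 := by exact_mod_cast Real.sq_sqrt (by norm_num : (0 : ℝ) ≤ 3)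
  have hs0 : ((√3 : ℝ) : ℂ) ≠ 0 := by
    exact_mod_cast (Real.sqrt_pos.mpr (by norm_num : (0 : ℝ) < 3)).ne'
  have hkey : (w - ((√3)⁻¹ : ℝ)) ^ 2 * (w + 2 * ((√3)⁻¹ : ℝ)) =
      (((3 * √3 / 2)⁻¹ - q⁻¹ : ℝ) : ℂ) := by
    push_cast
    field_simp
    linear_combination 9 * ((√3 : ℝ) : ℂ) * hw +
      (3 * q * w ^ 3 * ((√3 : ℝ) : ℂ) - 2 * q + 3 * ((√3 : ℝ) : ℂ)) * hs
  have hfar : 1 ≤ ‖w + 2 * ((√3)⁻¹ : ℝ)‖ := by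
    have : 1 ≤ w.re + 2 * (√3)⁻¹ := by
      rw [← div_eq_mul_inv, ← sub_le_iff_le_add', le_div_iff₀ (by positivity)]
      nlinarith [Real.sq_sqrt (by norm_num : (0 : ℝ) ≤ 3), Real.sqrt_nonneg 3]
    refine le_trans ?_ (Complex.re_le_norm _)
    rwa [Complex.add_re, ← Complex.ofReal_ofNat, ← Complex.ofReal_mul, Complex.ofReal_re]
  calc ‖w - ((√3)⁻¹ : ℝ)‖ ^ 2 ≤ ‖w - ((√3)⁻¹ : ℝ)‖ ^ 2 * ‖w + 2 * ((√3)⁻¹ : ℝ)‖ :=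
        le_mul_of_one_le_right (by positivity) hfar
    _ = |(3 * √3 / 2)⁻¹ - q⁻¹| := by
        rw [← norm_pow, ← norm_mul, hkey, Complex.norm_real, Real.norm_eq_abs]

theorem tendsto_epsilon_isQtilde_critical :
    Tendsto (fun q => Classical.epsilon (IsQtilde q)) (𝓝 (3 * √3 / 2)) (𝓝 ((√3)⁻¹ : ℝ)) := by
  have hcrit : 0 < 3 * √3 / 2 := by positivity
  have hbound : ∀ᶠ q in 𝓝 (3 * √3 / 2),
      ‖Classical.epsilon (IsQtilde q) - ((√3)⁻¹ : ℝ)‖ ≤ √|(3 * √3 / 2)⁻¹ - q⁻¹| := by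
    filter_upwards [eventually_ne_nhds hcrit.ne'] with q hq
    obtain ⟨hroot, -, hre, -⟩ := Classical.epsilon_spec (exists_isQtilde hq)
    exact Real.le_sqrt_of_sq_le (norm_sub_sq_le_of_cubic_root hroot hre.le)
  have hlim : Tendsto (fun q : ℝ => √|(3 * √3 / 2)⁻¹ - q⁻¹|) (𝓝 (3 * √3 / 2)) (𝓝 0) := by
    have : ContinuousAt (fun q : ℝ => √|(3 * √3 / 2)⁻¹ - q⁻¹|) (3 * √3 / 2) :=
      (continuousAt_const.sub (continuousAt_inv₀ hcrit.ne')).abs.sqrt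
    simpa using this.tendsto
  rw [tendsto_iff_norm_sub_tendsto_zero]
  exact squeeze_zero' (Eventually.of_forall fun _ => norm_nonneg _) hbound hlim

theorem norm_div_mul_exp_at_inv_sqrt_three :
    ‖((((√3)⁻¹ : ℝ) : ℂ) - 1) / (((√3)⁻¹ : ℝ) + 1)‖ *
        Real.exp (3 * √3 / 2 * ((((√3)⁻¹ : ℝ) : ℂ) ^ 2).re) =
      (2 - √3) * Real.exp (√3 / 2) := by
  have h3 : √3 ^ 2 = 3 := Real.sq_sqrt (by norm_num)
  have h1 : 1 < √3 := by nlinarith [Real.sqrt_nonneg 3]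
  have hneg : ((√3)⁻¹ - 1) / ((√3)⁻¹ + 1) < 0 :=
    div_neg_of_neg_of_pos (by rw [sub_neg, inv_lt_one_iff₀]; exact Or.inr h1) (by positivity)
  rw [← Complex.ofReal_one, ← Complex.ofReal_sub, ← Complex.ofReal_add, ← Complex.ofReal_div,
    Complex.norm_real, Real.norm_eq_abs, abs_of_neg hneg, ← Complex.ofReal_pow,
    Complex.ofReal_re]
  congr 2
  · field_simp
    nlinarith
  · field_simp
    exact h3.symm

theorem tendsto_Htilde_critical :
    Tendsto Htilde (𝓝 (3 * √3 / 2)) (𝓝 ((2 - √3) * Real.exp (√3 / 2))) := by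
  have hε := tendsto_epsilon_isQtilde_critical
  have hne : (((√3)⁻¹ : ℝ) : ℂ) + 1 ≠ 0 := by
    exact_mod_cast (by positivity : (0 : ℝ) < (√3)⁻¹ + 1).ne'
  rw [← norm_div_mul_exp_at_inv_sqrt_three]
  exact ((hε.sub_const 1).div (hε.add_const 1) hne).norm.mul
    ((tendsto_id.mul (Complex.continuous_re.continuousAt.tendsto.comp (hε.pow 2))).rexp)

/-- The one-sided limits of H̃ at q = 3√3/2 both equal (2 - √3)·exp(√3/2). -/
theorem Htilde_continuous_at_critical :
    Tendsto Htilde (nhdsWithin (3 * Real.sqrt 3 / 2) (Set.Iio (3 * Real.sqrt 3 / 2)))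
      (nhds ((2 - Real.sqrt 3) * Real.exp (Real.sqrt 3 / 2))) ∧
    Tendsto Htilde (nhdsWithin (3 * Real.sqrt 3 / 2) (Set.Ioi (3 * Real.sqrt 3 / 2)))
      (nhds ((2 - Real.sqrt 3) * Real.exp (Real.sqrt 3 / 2))) :=
  ⟨tendsto_Htilde_critical.mono_left nhdsWithin_le_nhds,
    tendsto_Htilde_critical.mono_left nhdsWithin_le_nhds⟩
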